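/- A state C = (z(x), n(x,x+1))_{x∈ℤ} of non-negative integers is reachable (i.e. {x : n(x,x+1) > 0} is an integer interval [a, b−1] containing 0 in [a,b], and z(x) = n(x,x+1) + n(x−1,x) for all x) if and only if it can be created from the trivial all-zero state by a finite nearest-neighbour path on ℤ starting and ending at 0, where traversing the oriented edge (x,x+1) increments n(x,x+1) and visiting x increments z(x), except that the final visit at the origin is not counted in z(0). -/

import Mathlib

/-!
On a nearest-neighbour path the up-crossings minus the down-crossings of an edge `(x, x + 1)`
telescope to `[x < p N] - [x < p 0]`, so on a closed path they agree. Every step leaving `x`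
crosses `(x, x + 1)` upwards or `(x - 1, x)` downwards, hence the visits to `x` number
`n(x) + n(x - 1)`, and by the discrete intermediate value theorem the crossed edges of a closed
path fill the interval between its minimum and its maximum.

Conversely, inserting a back-and-forth step into a path that visits `x` or `x + 1` adds exactly
one crossing of `(x, x + 1)`. The indicator of an interval `[a, b)` with `a ≤ 0 ≤ b` is built
this way edge by edge from the trivial path, and any `n` supported on `[a, b)` from it by adding
the surplus crossings one at a time.
-/

open Finset

def IsNearestNeighbourPath (p : ℕ → ℤ) (N : ℕ) : Prop :=
  ∀ i, i < N → p (i + 1) = p i + 1 ∨ p (i + 1) = p i - 1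

def upCrossings (p : ℕ → ℤ) (N : ℕ) (x : ℤ) : ℕ :=
  ((range N).filter (fun i => p i = x ∧ p (i + 1) = x + 1)).card

def downCrossings (p : ℕ → ℤ) (N : ℕ) (x : ℤ) : ℕ :=
  ((range N).filter (fun i => p i = x + 1 ∧ p (i + 1) = x)).card

def visits (p : ℕ → ℤ) (N : ℕ) (x : ℤ) : ℕ :=
  ((range N).filter (fun i => p i = x)).card

variable {p : ℕ → ℤ} {N : ℕ}

theorem sum_range_add_two_eq {M : Type*} [AddCommMonoid M] {f g : ℕ → M} {t : ℕ}
    (ht : t ≤ N) (hlow : ∀ i < t, f i = g i)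
    (hhigh : ∀ i, t ≤ i → i < N → f (i + 2) = g i) :
    ∑ i ∈ range (N + 2), f i = ∑ i ∈ range N, g i + (f t + f (t + 1)) := by
  have hshift : ∑ i ∈ Ico (t + 2) (N + 2), f i = ∑ i ∈ Ico t N, g i := by
    rw [← sum_Ico_add']
    exact sum_congr rfl fun i hi => hhigh i (mem_Ico.1 hi).1 (mem_Ico.1 hi).2
  rw [← sum_range_add_sum_Ico _ (by omega : t ≤ N + 2), ← sum_range_add_sum_Ico _ ht,
    sum_eq_sum_Ico_succ_bot (by omega), sum_eq_sum_Ico_succ_bot (by omega), hshift,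
    sum_congr rfl fun i hi => hlow i (mem_range.1 hi)]
  abel

theorem exists_of_upCrossings_pos {x : ℤ} (h : 0 < upCrossings p N x) :
    ∃ i < N, p i = x ∧ p (i + 1) = x + 1 := by
  obtain ⟨i, hi⟩ := card_pos.1 h
  rw [mem_filter, mem_range] at hi
  exact ⟨i, hi⟩

theorem exists_visit_of_mem_Icc {a b x : ℤ} (ha : a ≤ p 0) (hb : p 0 ≤ b)
    (hsupp : {x | 0 < upCrossings p N x} = Set.Ico a b) (hx : x ∈ Set.Icc a b) :
    ∃ t ≤ N, p t = x := by
  have crossed : ∀ y, a ≤ y → y < b → ∃ i < N, p i = y ∧ p (i + 1) = y + 1 :=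
    fun y hay hyb => exists_of_upCrossings_pos
      (show y ∈ {x | 0 < upCrossings p N x} from hsupp ▸ ⟨hay, hyb⟩)
  obtain ⟨hax, hxb⟩ := hx
  rcases hxb.lt_or_eq with hxb | rfl
  · obtain ⟨i, hi, hpi, -⟩ := crossed x hax hxb
    exact ⟨i, hi.le, hpi⟩
  rcases hax.lt_or_eq with hab | rfl
  · obtain ⟨i, hi, -, hpi⟩ := crossed (x - 1) (by omega) (by omega)
    exact ⟨i + 1, hi, by omega⟩
  · exact ⟨0, N.zero_le, by omega⟩

namespace IsNearestNeighbourPath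

/-- Telescoping `[x < p (i + 1)] - [x < p i]` along the path. -/
theorem upCrossings_sub_downCrossings (hp : IsNearestNeighbourPath p N) (x : ℤ) :
    (upCrossings p N x : ℤ) - downCrossings p N x
      = (if x < p N then 1 else 0) - (if x < p 0 then 1 else 0) := by
  rw [upCrossings, downCrossings, card_filter, card_filter,
    ← sum_range_sub (fun i => if x < p i then (1 : ℤ) else 0)]
  push_cast
  rw [← sum_sub_distrib]
  refine sum_congr rfl fun i hi => ?_
  rcases hp i (mem_range.1 hi) with h | h <;> rw [h] <;> split_ifs <;> omega

theorem upCrossings_eq_downCrossings (hp : IsNearestNeighbourPath p N) (hclosed : p N = p 0)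
    (x : ℤ) : upCrossings p N x = downCrossings p N x := by
  have := hp.upCrossings_sub_downCrossings x
  rw [hclosed, sub_self] at this
  omega

theorem visits_eq_upCrossings_add_downCrossings (hp : IsNearestNeighbourPath p N) (x : ℤ) :
    visits p N x = upCrossings p N x + downCrossings p N (x - 1) := by
  rw [visits, upCrossings, downCrossings, card_filter, card_filter, card_filter,
    ← sum_add_distrib]
  refine sum_congr rfl fun i hi => ?_
  rcases hp i (mem_range.1 hi) with h | h <;> rw [h] <;> split_ifs <;> omega

theorem visits_eq_upCrossings_add_upCrossings (hp : IsNearestNeighbourPath p N)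
    (hclosed : p N = p 0) (x : ℤ) :
    visits p N x = upCrossings p N x + upCrossings p N (x - 1) := by
  rw [hp.visits_eq_upCrossings_add_downCrossings,
    hp.upCrossings_eq_downCrossings hclosed (x - 1)]

theorem exists_upCrossing_of_le_of_lt (hp : IsNearestNeighbourPath p N) {s t : ℕ} {x : ℤ}
    (hst : s ≤ t) (htN : t ≤ N) (hs : p s ≤ x) (ht : x < p t) :
    ∃ i, s ≤ i ∧ i < t ∧ p i = x ∧ p (i + 1) = x + 1 := by
  induction t, hst using Nat.le_induction with
  | base => omega
  | succ t hst ih =>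
    by_cases hxt : x < p t
    · obtain ⟨i, hsi, hit, hi⟩ := ih (by omega) hxt
      exact ⟨i, hsi, by omega, hi⟩
    · have := hp t (by omega)
      exact ⟨t, hst, by omega, by omega, by omega⟩

theorem exists_Ico_eq_setOf_upCrossings_pos (hp : IsNearestNeighbourPath p N)
    (hclosed : p N = p 0) :
    ∃ a b, a ≤ p 0 ∧ p 0 ≤ b ∧ {x | 0 < upCrossings p N x} = Set.Ico a b := by
  set S := (range (N + 1)).image p
  have mem_S : ∀ {i}, i ≤ N → p i ∈ S := fun hi =>
    mem_image_of_mem p (mem_range.2 (Nat.lt_succ_of_le hi))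
  have hS : S.Nonempty := ⟨p 0, mem_S N.zero_le⟩
  refine ⟨S.min' hS, S.max' hS, S.min'_le _ (mem_S N.zero_le), S.le_max' _ (mem_S N.zero_le),
    ?_⟩
  ext x
  simp only [Set.mem_ofPred_eq, Set.mem_Ico]
  constructor
  · intro hx
    obtain ⟨i, hiN, hpi, hpi'⟩ := exists_of_upCrossings_pos hx
    have := S.min'_le _ (mem_S hiN.le)
    have := S.le_max' _ (mem_S (i := i + 1) hiN)
    omega
  · rintro ⟨hax, hxb⟩
    suffices ∃ i, i < N ∧ p i = x ∧ p (i + 1) = x + 1 by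
      obtain ⟨i, hi⟩ := this
      exact card_pos.2 ⟨i, mem_filter.2 ⟨mem_range.2 hi.1, hi.2⟩⟩
    by_cases hx0 : p 0 ≤ x
    · obtain ⟨j, hj, hpj⟩ := mem_image.1 (S.max'_mem hS)
      rw [mem_range, Nat.lt_succ_iff] at hj
      obtain ⟨i, -, hij, hi⟩ := hp.exists_upCrossing_of_le_of_lt j.zero_le hj hx0 (hpj ▸ hxb)
      exact ⟨i, hij.trans_le hj, hi⟩
    · obtain ⟨j, hj, hpj⟩ := mem_image.1 (S.min'_mem hS)
      rw [mem_range, Nat.lt_succ_iff] at hj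
      obtain ⟨i, -, hiN, hi⟩ :=
        hp.exists_upCrossing_of_le_of_lt hj le_rfl (hpj ▸ hax) (by omega)
      exact ⟨i, hiN, hi⟩

/-- Inserting the back-and-forth step `p t → 2x + 1 - p t → p t` at time `t` adds one
up-crossing of the edge `(x, x + 1)`. -/
theorem exists_upCrossings_eq_add_single (hp : IsNearestNeighbourPath p N) {t : ℕ} {x : ℤ}
    (ht : t ≤ N) (hpt : p t = x ∨ p t = x + 1) :
    ∃ q : ℕ → ℤ, q 0 = p 0 ∧ q (N + 2) = p N ∧ IsNearestNeighbourPath q (N + 2) ∧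
      upCrossings q (N + 2) = upCrossings p N + Pi.single x 1 := by
  set q : ℕ → ℤ := fun i =>
    if i ≤ t then p i else if i = t + 1 then 2 * x + 1 - p t else p (i - 2)
  have q_low : ∀ i ≤ t, q i = p i := fun i hi => if_pos hi
  have q_spike : q (t + 1) = 2 * x + 1 - p t := by simp [q]
  have q_high : ∀ i, t + 2 ≤ i → q i = p (i - 2) := fun i hi => by
    simp only [q]; rw [if_neg (by omega), if_neg (by omega)]
  have q_return : q (t + 2) = p t := q_high _ le_rfl
  refine ⟨q, q_low 0 t.zero_le, q_high _ (by omega), fun i hi => ?_, funext fun y => ?_⟩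
  · obtain hit | rfl | rfl | hti : i < t ∨ i = t ∨ i = t + 1 ∨ t + 2 ≤ i := by omega
    · rw [q_low i hit.le, q_low (i + 1) hit]
      exact hp i (by omega)
    · rw [q_low i le_rfl, q_spike]
      omega
    · rw [q_spike, q_return]
      omega
    · rw [q_high i hti, q_high (i + 1) (by omega), show i + 1 - 2 = i - 2 + 1 by omega]
      exact hp (i - 2) (by omega)
  · simp only [upCrossings, card_filter, Pi.add_apply, Pi.single_apply]
    rw [sum_range_add_two_eq ht (g := fun i => if p i = y ∧ p (i + 1) = y + 1 then 1 else 0)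
      (fun i hi => by simp only [q_low i hi.le, q_low (i + 1) hi])
      (fun i hti hiN => by
        simp only [q_high (i + 2) (by omega), q_high (i + 2 + 1) (by omega)]; rfl),
      q_low t le_rfl, q_spike, q_return]
    congr 1
    split_ifs <;> omega

end IsNearestNeighbourPath

def IsEdgeLocalTime (n : ℤ → ℕ) : Prop :=
  ∃ (N : ℕ) (p : ℕ → ℤ),
    p 0 = 0 ∧ p N = 0 ∧ IsNearestNeighbourPath p N ∧ upCrossings p N = n

theorem IsEdgeLocalTime.add_single {n : ℤ → ℕ} {a b x : ℤ} (hn : IsEdgeLocalTime n)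
    (ha : a ≤ 0) (hb : 0 ≤ b) (hsupp : {x | 0 < n x} = Set.Ico a b)
    (hx : x ∈ Set.Icc a b ∨ x + 1 ∈ Set.Icc a b) :
    IsEdgeLocalTime (n + Pi.single x 1) := by
  obtain ⟨N, p, hp0, hpN, hp, rfl⟩ := hn
  have visit := fun y => exists_visit_of_mem_Icc (x := y) (hp0 ▸ ha) (hp0 ▸ hb) hsupp
  obtain ⟨t, htN, hpt⟩ : ∃ t ≤ N, p t = x ∨ p t = x + 1 := by
    rcases hx with hx | hx
    · obtain ⟨t, htN, hpt⟩ := visit x hx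
      exact ⟨t, htN, Or.inl hpt⟩
    · obtain ⟨t, htN, hpt⟩ := visit (x + 1) hx
      exact ⟨t, htN, Or.inr hpt⟩
  obtain ⟨q, hq0, hqN, hq, hqn⟩ := hp.exists_upCrossings_eq_add_single htN hpt
  exact ⟨N + 2, q, hq0.trans hp0, hqN.trans hpN, hq, hqn⟩

theorem setOf_indicator_Ico_pos (a b : ℤ) :
    {x | 0 < (Set.Ico a b).indicator (1 : ℤ → ℕ) x} = Set.Ico a b := by
  ext x
  by_cases hx : x ∈ Set.Ico a b <;> simp [hx]

theorem isEdgeLocalTime_indicator_Ico {a b : ℤ} (ha : a ≤ 0) (hb : 0 ≤ b) :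
    IsEdgeLocalTime ((Set.Ico a b).indicator 1 : ℤ → ℕ) := by
  rcases hb.lt_or_eq with hb | rfl
  · have split : (Set.Ico a b).indicator (1 : ℤ → ℕ)
        = (Set.Ico a (b - 1)).indicator 1 + Pi.single (b - 1) 1 := by
      ext x
      simp only [Set.indicator_apply, Pi.add_apply, Pi.one_apply, Pi.single_apply, Set.mem_Ico]
      split_ifs <;> omega
    rw [split]
    exact (isEdgeLocalTime_indicator_Ico ha (by omega)).add_single ha (by omega)
      (setOf_indicator_Ico_pos _ _) (Or.inl ⟨by omega, le_rfl⟩)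
  rcases ha.lt_or_eq with ha | rfl
  · have split : (Set.Ico a 0).indicator (1 : ℤ → ℕ)
        = (Set.Ico (a + 1) 0).indicator 1 + Pi.single a 1 := by
      ext x
      simp only [Set.indicator_apply, Pi.add_apply, Pi.one_apply, Pi.single_apply, Set.mem_Ico]
      split_ifs <;> omega
    rw [split]
    exact (isEdgeLocalTime_indicator_Ico (by omega) le_rfl).add_single (by omega) le_rfl
      (setOf_indicator_Ico_pos _ _) (Or.inr ⟨le_rfl, by omega⟩)
  · refine ⟨0, 0, rfl, rfl, fun i hi => absurd hi i.not_lt_zero, ?_⟩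
    ext x
    simp [upCrossings]
termination_by (b - a).toNat

theorem isEdgeLocalTime_of_setOf_pos_eq_Ico {n : ℤ → ℕ} {a b : ℤ}
    (ha : a ≤ 0) (hb : 0 ≤ b) (hsupp : {x | 0 < n x} = Set.Ico a b) : IsEdgeLocalTime n := by
  have mem_supp : ∀ x, 0 < n x ↔ x ∈ Set.Ico a b := fun x => Set.ext_iff.1 hsupp x
  by_cases hmult : ∃ c, 2 ≤ n c
  · obtain ⟨c, hc⟩ := hmult
    have hcI : c ∈ Set.Ico a b := (mem_supp c).1 (by omega)
    set n' := n - Pi.single c 1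
    have n'_apply : ∀ x, n' x = n x - if x = c then 1 else 0 := fun x => by
      simp only [n', Pi.sub_apply, Pi.single_apply]
    have hn' : n' + Pi.single c 1 = n := by
      ext x
      rw [Pi.add_apply, n'_apply, Pi.single_apply]
      by_cases hx : x = c
      · subst hx; rw [if_pos rfl]; omega
      · rw [if_neg hx]; omega
    have hsupp' : {x | 0 < n' x} = Set.Ico a b := by
      ext x
      rw [← mem_supp, Set.mem_ofPred_eq, n'_apply]
      by_cases hx : x = c
      · subst hx; rw [if_pos rfl]; omega
      · rw [if_neg hx]; omega
    have mass_lt : ∑ x ∈ Ico a b, n' x < ∑ x ∈ Ico a b, n x := by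
      refine sum_lt_sum (fun x _ => by rw [← hn']; simp) ⟨c, by simpa using hcI, ?_⟩
      rw [← hn']; simp
    rw [← hn']
    exact (isEdgeLocalTime_of_setOf_pos_eq_Ico ha hb hsupp').add_single ha hb hsupp'
      (Or.inl (Set.Ico_subset_Icc_self hcI))
  · convert isEdgeLocalTime_indicator_Ico ha hb using 1
    ext x
    push Not at hmult
    by_cases hx : x ∈ Set.Ico a b
    · rw [Set.indicator_of_mem hx]
      have := (mem_supp x).2 hx
      have := hmult x
      simp only [Pi.one_apply]
      omega
    · rw [Set.indicator_of_notMem hx]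
      exact Nat.eq_zero_of_not_pos (hx ∘ (mem_supp x).1)
termination_by ∑ x ∈ Ico a b, n x

theorem reachable_iff_path_general
    (z : ℤ → ℕ) (nE : ℤ → ℕ) :
    ((∃ a b : ℤ, a ≤ 0 ∧ 0 ≤ b ∧ {x : ℤ | 0 < nE x} = Set.Ico a b) ∧
      (∀ x, z x = nE x + nE (x - 1)))
    ↔
    (∃ (N : ℕ) (p : ℕ → ℤ), p 0 = 0 ∧ p N = 0 ∧
      (∀ i, i < N → p (i + 1) = p i + 1 ∨ p (i + 1) = p i - 1) ∧
      (∀ x, nE x =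
        ((Finset.range N).filter (fun i => p i = x ∧ p (i + 1) = x + 1)).card) ∧
      (∀ x, z x = ((Finset.range N).filter (fun i => p i = x)).card)) := by
  constructor
  · rintro ⟨⟨a, b, ha, hb, hsupp⟩, hz⟩
    obtain ⟨N, p, hp0, hpN, hp, rfl⟩ := isEdgeLocalTime_of_setOf_pos_eq_Ico ha hb hsupp
    refine ⟨N, p, hp0, hpN, hp, fun x => rfl, fun x => ?_⟩
    rw [hz, ← hp.visits_eq_upCrossings_add_upCrossings (hpN.trans hp0.symm)]
    rfl
  · rintro ⟨N, p, hp0, hpN, hp : IsNearestNeighbourPath p N, hn, hz⟩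
    obtain rfl : nE = upCrossings p N := funext hn
    obtain rfl : z = visits p N := funext hz
    obtain ⟨a, b, ha, hb, hsupp⟩ := hp.exists_Ico_eq_setOf_upCrossings_pos (hpN.trans hp0.symm)
    exact ⟨⟨a, b, hp0 ▸ ha, hp0 ▸ hb, hsupp⟩,
      hp.visits_eq_upCrossings_add_upCrossings (hpN.trans hp0.symm)⟩

/-- A state `C = (z(x), n(x,x+1))_{x∈ℤ}` (non-negative integers with
`n(x,x+1) ≤ z(x+1)`) is reachable — i.e. `{x : n(x,x+1) > 0}` is an integer interval
`[a, b−1]` with `a ≤ 0 ≤ b` and `z(x) = n(x,x+1) + n(x−1,x)` for all `x` — if and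
only if it is created from the trivial state by a finite nearest-neighbour path on
`ℤ` starting and ending at `0`: `n(x,x+1)` counts traversals of the oriented edge
`(x,x+1)` and `z(x)` counts the visits to `x` except the terminal visit at `0`. -/
theorem reachable_iff_path
    (z : ℤ → ℕ) (nE : ℤ → ℕ)
    (hstate : ∀ x, nE x ≤ z (x + 1)) :
    ((∃ a b : ℤ, a ≤ 0 ∧ 0 ≤ b ∧ {x : ℤ | 0 < nE x} = Set.Ico a b) ∧
      (∀ x, z x = nE x + nE (x - 1)))
    ↔
    (∃ (N : ℕ) (p : ℕ → ℤ), p 0 = 0 ∧ p N = 0 ∧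
      (∀ i, i < N → p (i + 1) = p i + 1 ∨ p (i + 1) = p i - 1) ∧
      (∀ x, nE x =
        ((Finset.range N).filter (fun i => p i = x ∧ p (i + 1) = x + 1)).card) ∧
      (∀ x, z x = ((Finset.range N).filter (fun i => p i = x)).card)) :=
  reachable_iff_path_general z nE
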